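/- arXiv:1811.09809 — 6 statements merged into one kernel-verified Lean document; each statement's English description precedes it below -/
import Mathlib

section
/- The element (σ_1 σ_2^{-1})³ of the braid group B_3 lies in the kernel of the representation Ψ defined by Ψ(σ_1) = [[0,t,0],[b,0,0],[0,0,1]] and Ψ(σ_2) = [[1,0,0],[0,0,t],[0,b,0]], i.e., Ψ((σ_1 σ_2^{-1})³) = I_3. -/
/-- The braid relations on `m` generators. -/
def braidRels (m : ℕ) : Set (FreeGroup (Fin m)) :=
  { r | (∃ i j : Fin m, (i : ℕ) + 1 = (j : ℕ) ∧
          r = .of i * .of j * .of i * (.of j * .of i * .of j)⁻¹) ∨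
        (∃ i j : Fin m, (i : ℕ) + 2 ≤ (j : ℕ) ∧
          r = .of i * .of j * (.of j * .of i)⁻¹) }

/-- The Artin braid group on `n` strands. -/
abbrev BraidGroup (n : ℕ) : Type := PresentedGroup (braidRels (n - 1))

/-- The Artin generators (0-indexed: `σ i` crosses strands `i+1` and `i+2`). -/
def σ {n : ℕ} (i : Fin (n - 1)) : BraidGroup n := PresentedGroup.of i

/-- `genMat R n a b c d i` : the n×n identity matrix, except with the 2×2 block
`[[a,b],[c,d]]` in (0-indexed) rows/columns `i, i+1`. -/
def genMat (R : Type*) [CommRing R] (n : ℕ) (a b c d : R) (i : ℕ) :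
    Matrix (Fin n) (Fin n) R := fun j k =>
  if (j : ℕ) = i ∧ (k : ℕ) = i then a
  else if (j : ℕ) = i ∧ (k : ℕ) = i + 1 then b
  else if (j : ℕ) = i + 1 ∧ (k : ℕ) = i then c
  else if (j : ℕ) = i + 1 ∧ (k : ℕ) = i + 1 then d
  else if j = k then 1 else 0

/-- The ring of Laurent polynomials in two variables over ℤ. -/
abbrev L2 : Type := LaurentPolynomial (LaurentPolynomial ℤ)

noncomputable def tL : L2 := LaurentPolynomial.T 1
noncomputable def bL : L2 := LaurentPolynomial.C (LaurentPolynomial.T 1)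
noncomputable def tLinv : L2 := LaurentPolynomial.T (-1)
noncomputable def bLinv : L2 := LaurentPolynomial.C (LaurentPolynomial.T (-1))


set_option maxHeartbeats 1000000 in
theorem stmt_6 (Ψ : BraidGroup 3 →* GL (Fin 3) L2)
    (h1 : (↑(Ψ (σ ⟨0, by norm_num⟩)) : Matrix (Fin 3) (Fin 3) L2) = !![0, tL, 0; bL, 0, 0; 0, 0, 1])
    (h2 : (↑(Ψ (σ ⟨1, by norm_num⟩)) : Matrix (Fin 3) (Fin 3) L2) = !![1, 0, 0; 0, 0, tL; 0, bL, 0]) :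
    Ψ ((σ ⟨0, by norm_num⟩ * (σ ⟨1, by norm_num⟩)⁻¹) ^ 3) = 1 := by
  have ht : tL * tLinv = 1 := by
    rw [tL, tLinv, ← LaurentPolynomial.T_add]; norm_num
  have hb : bL * bLinv = 1 := by
    rw [bL, bLinv, ← map_mul, ← LaurentPolynomial.T_add]; norm_num
  have hv : (↑((Ψ (σ ⟨1, by norm_num⟩))⁻¹) : Matrix (Fin 3) (Fin 3) L2)
      = !![1, 0, 0; 0, 0, bLinv; 0, tLinv, 0] := by
    rw [Matrix.coe_units_inv, h2]
    apply Matrix.inv_eq_right_inv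
    rw [Matrix.mul_fin_three, Matrix.one_fin_three, ← Matrix.ext_iff]
    intro i j
    fin_cases i <;> fin_cases j <;> simp <;>
      first
        | linear_combination ht
        | linear_combination hb
  apply Units.ext
  rw [map_pow, map_mul, map_inv]
  show ((Ψ (σ ⟨0, by norm_num⟩) * (Ψ (σ ⟨1, by norm_num⟩))⁻¹ : GL (Fin 3) L2) :
      Matrix (Fin 3) (Fin 3) L2) ^ 3 = 1
  rw [Units.val_mul, h1, hv, Matrix.mul_fin_three, pow_succ, pow_succ, pow_one,
    Matrix.mul_fin_three, Matrix.mul_fin_three, Matrix.one_fin_three, ← Matrix.ext_iff]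
  intro i j
  fin_cases i <;> fin_cases j <;> simp <;>
    linear_combination (bL * bLinv) * ht + hb
end

section
/- The representation Ψ: B_3 → GL_3(ℤ[t^{±1}, b^{±1}]) with Ψ(σ_1) = [[0,t,0],[b,0,0],[0,0,1]] and Ψ(σ_2) = [[1,0,0],[0,0,t],[0,b,0]] is not injective. -/
/-! `Ψ(σ₁)² = diag(tb, tb, 1)` and `Ψ(σ₂)² = diag(1, tb, tb)` are diagonal, so they
commute. But `σ₁²` and `σ₂²` do not commute in `B₃`: under the classical map `B₃ → SL(2, ℤ)`,
`σ₁ ↦ [[1,1],[0,1]]`, `σ₂ ↦ [[1,0],[-1,1]]`, their images do not commute. -/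

open MatrixGroups

section
variable {R : Type*} [CommRing R] (t b : R)

lemma sq_weightedSwap_zero_one : (!![0, t, 0; b, 0, 0; 0, 0, 1] : Matrix (Fin 3) (Fin 3) R) ^ 2 =
    Matrix.diagonal ![t * b, t * b, 1] := by
  ext i j
  fin_cases i <;> fin_cases j <;> simp [sq, mul_comm b t]

lemma sq_weightedSwap_one_two : (!![1, 0, 0; 0, 0, t; 0, b, 0] : Matrix (Fin 3) (Fin 3) R) ^ 2 =
    Matrix.diagonal ![1, t * b, t * b] := by
  ext i j
  fin_cases i <;> fin_cases j <;> simp [sq, mul_comm b t]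

end

def sl2BraidGen : Fin 2 → SL(2, ℤ) :=
  ![ModularGroup.T, ⟨!![1, 0; -1, 1], by norm_num [Matrix.det_fin_two]⟩]

lemma coe_sl2BraidGen_zero : (sl2BraidGen 0 : Matrix (Fin 2) (Fin 2) ℤ) = !![1, 1; 0, 1] := rfl

lemma coe_sl2BraidGen_one : (sl2BraidGen 1 : Matrix (Fin 2) (Fin 2) ℤ) = !![1, 0; -1, 1] := rfl

lemma sl2BraidGen_braidRels : ∀ r ∈ braidRels 2, FreeGroup.lift sl2BraidGen r = 1 := by
  rintro r (⟨i, j, hij, rfl⟩ | ⟨i, j, hij, rfl⟩)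
  · obtain ⟨rfl, rfl⟩ : i = 0 ∧ j = 1 := by omega
    rw [map_mul, map_inv, mul_inv_eq_one]
    apply Subtype.coe_injective
    simp only [map_mul, FreeGroup.lift_apply_of, Matrix.SpecialLinearGroup.coe_mul,
      coe_sl2BraidGen_zero, coe_sl2BraidGen_one]
    simp
  · omega

def braidToSL2 : BraidGroup 3 →* SL(2, ℤ) := PresentedGroup.toGroup sl2BraidGen_braidRels

lemma braidToSL2_σ (i : Fin 2) : braidToSL2 (σ i) = sl2BraidGen i := PresentedGroup.toGroup.of _

lemma not_commute_sl2BraidGen_sq : ¬ Commute (sl2BraidGen 0 ^ 2) (sl2BraidGen 1 ^ 2) := by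
  intro h
  have h_coe := congrArg Subtype.val h.eq
  simp only [Matrix.SpecialLinearGroup.coe_mul, Matrix.SpecialLinearGroup.coe_pow,
    coe_sl2BraidGen_zero, coe_sl2BraidGen_one] at h_coe
  norm_num [sq, Matrix.mul_fin_two] at h_coe

lemma not_commute_σ_sq :
    ¬ Commute ((σ ⟨0, by norm_num⟩ : BraidGroup 3) ^ 2) (σ ⟨1, by norm_num⟩ ^ 2) := by
  intro h
  have h_sl2 := h.map braidToSL2
  rw [map_pow, map_pow, braidToSL2_σ, braidToSL2_σ] at h_sl2
  exact not_commute_sl2BraidGen_sq h_sl2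

theorem stmt_8 (Ψ : BraidGroup 3 →* GL (Fin 3) L2)
    (h1 : (↑(Ψ (σ ⟨0, by norm_num⟩)) : Matrix (Fin 3) (Fin 3) L2) = !![0, tL, 0; bL, 0, 0; 0, 0, 1])
    (h2 : (↑(Ψ (σ ⟨1, by norm_num⟩)) : Matrix (Fin 3) (Fin 3) L2) = !![1, 0, 0; 0, 0, tL; 0, bL, 0]) :
    ¬ Function.Injective Ψ := by
  intro hinj
  refine not_commute_σ_sq (Commute.of_map hinj (Units.ext ?_))
  simp only [map_pow, Units.val_mul, Units.val_pow_eq_pow_val, h1, h2, sq_weightedSwap_zero_one,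
    sq_weightedSwap_one_two]
  exact (Matrix.commute_diagonal _ _).eq
end

section
/- In B_4, the element σ_1² σ_3² σ_2 σ_3^{-2} σ_1^{-2} σ_2^{-1} lies in the kernel of the representation Ψ: B_4 → GL_4(ℤ[t^{±1}, b^{±1}]) determined by Ψ(σ_i) = I_{i-1} ⊕ [[0,t],[b,0]] ⊕ I_{3-i}. -/
lemma gm0 : genMat L2 4 0 tL bL 0 0 = !![0,tL,0,0; bL,0,0,0; 0,0,1,0; 0,0,0,1] := by
  ext i j; fin_cases i <;> fin_cases j <;> rfl

lemma gm1 : genMat L2 4 0 tL bL 0 1 = !![1,0,0,0; 0,0,tL,0; 0,bL,0,0; 0,0,0,1] := by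
  ext i j; fin_cases i <;> fin_cases j <;> rfl

lemma gm2 : genMat L2 4 0 tL bL 0 2 = !![1,0,0,0; 0,1,0,0; 0,0,0,tL; 0,0,bL,0] := by
  ext i j; fin_cases i <;> fin_cases j <;> rfl

set_option maxHeartbeats 2000000 in
lemma key_comm :
    (genMat L2 4 0 tL bL 0 0 * genMat L2 4 0 tL bL 0 0 *
      (genMat L2 4 0 tL bL 0 2 * genMat L2 4 0 tL bL 0 2)) * genMat L2 4 0 tL bL 0 1 =
    genMat L2 4 0 tL bL 0 1 * (genMat L2 4 0 tL bL 0 0 * genMat L2 4 0 tL bL 0 0 *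
      (genMat L2 4 0 tL bL 0 2 * genMat L2 4 0 tL bL 0 2)) := by
  rw [gm0, gm1, gm2]
  refine Matrix.ext fun i j => ?_
  fin_cases i <;> fin_cases j <;>
    simp [Matrix.mul_apply, Fin.sum_univ_four, Matrix.vecHead, Matrix.vecTail] <;> ring

theorem stmt_9 (Ψ : BraidGroup 4 →* GL (Fin 4) L2)
    (hΨ : ∀ i : Fin 3, (↑(Ψ (σ i)) : Matrix (Fin 4) (Fin 4) L2) = genMat L2 4 0 tL bL 0 (i : ℕ)) :
    Ψ (σ ⟨0, by norm_num⟩ ^ 2 * σ ⟨2, by norm_num⟩ ^ 2 * σ ⟨1, by norm_num⟩ *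
       (σ ⟨2, by norm_num⟩)⁻¹ ^ 2 * (σ ⟨0, by norm_num⟩)⁻¹ ^ 2 * (σ ⟨1, by norm_num⟩)⁻¹) = 1 := by
  simp only [map_mul, map_pow, map_inv]
  set A := Ψ (σ ⟨0, by norm_num⟩) with hA
  set B := Ψ (σ ⟨1, by norm_num⟩) with hB
  set C := Ψ (σ ⟨2, by norm_num⟩) with hC
  have h : A ^ 2 * C ^ 2 * B = B * (A ^ 2 * C ^ 2) := by
    apply Units.ext
    simp only [Units.val_mul, Units.val_pow_eq_pow_val, pow_two]
    have h0 := hΨ ⟨0, by norm_num⟩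
    have h1 := hΨ ⟨1, by norm_num⟩
    have h2 := hΨ ⟨2, by norm_num⟩
    simp only [hA, hB, hC]
    rw [h0, h1, h2]
    simpa [mul_assoc] using key_comm
  have : A ^ 2 * C ^ 2 * B * (C ^ 2)⁻¹ * (A ^ 2)⁻¹ * B⁻¹ = 1 := by
    rw [h]; group
  simpa [inv_pow] using this
end

section
/- Let R be an integral domain and a, b, c, d ∈ R with b a unit and ad - bc a unit. The 3×3 matrices A_1 = [[a,b,0],[c,d,0],[0,0,1]] and A_2 = [[1,0,0],[0,a,b],[0,c,d]] satisfy the braid relation A_1 A_2 A_1 = A_2 A_1 A_2 if and only if one of the following holds: (1) d = 0 and bc = 1 - a; (2) a = 0 and bc = 1 - d; (3) a = d = 0. -/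
set_option maxHeartbeats 1600000 in
theorem stmt_12 (R : Type*) [CommRing R] [IsDomain R] (a b c d : R)
    (hb : IsUnit b) (hdet : IsUnit (a * d - b * c)) :
    !![a, b, 0; c, d, 0; 0, 0, 1] * !![1, 0, 0; 0, a, b; 0, c, d] * !![a, b, 0; c, d, 0; 0, 0, 1] =
      !![1, 0, 0; 0, a, b; 0, c, d] * !![a, b, 0; c, d, 0; 0, 0, 1] * !![1, 0, 0; 0, a, b; 0, c, d] ↔
    (d = 0 ∧ b * c = 1 - a) ∨ (a = 0 ∧ b * c = 1 - d) ∨ (a = 0 ∧ d = 0) := by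
  have hb0 : b ≠ 0 := hb.ne_zero
  constructor
  · intro h
    have h00 := congrFun (congrFun h 0) 0
    have h01 := congrFun (congrFun h 0) 1
    have h22 := congrFun (congrFun h 2) 2
    simp [Matrix.mul_apply, Fin.sum_univ_three] at h00 h01 h22
    by_cases ha : a = 0
    · by_cases hd : d = 0
      · exact Or.inr (Or.inr ⟨ha, hd⟩)
      · refine Or.inr (Or.inl ⟨ha, ?_⟩)
        have : d * (b * c - (1 - d)) = 0 := by linear_combination -h22
        rcases mul_eq_zero.1 this with h' | h'
        · exact absurd h' hd
        · linear_combination h'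
    · have hd : d = 0 := by
        have : a * b * d = 0 := by linear_combination h01
        rcases mul_eq_zero.1 this with h' | h'
        · rcases mul_eq_zero.1 h' with h'' | h''
          · exact absurd h'' ha
          · exact absurd h'' hb0
        · exact h'
      refine Or.inl ⟨hd, ?_⟩
      have : a * (b * c - (1 - a)) = 0 := by linear_combination h00
      rcases mul_eq_zero.1 this with h' | h'
      · exact absurd h' ha
      · exact sub_eq_zero.1 h'
  · have key : ∀ x y z w : R, x * (y * w) = y * (x * w) := fun x y z w => by ring
    rintro (⟨hd, hbc⟩ | ⟨ha, hbc⟩ | ⟨ha, hd⟩)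
    · subst hd
      ext i j
      fin_cases i <;> fin_cases j <;>
        simp [Matrix.mul_apply, Fin.sum_univ_three, Matrix.vecHead, Matrix.vecTail] <;>
        first
          | ring1
          | linear_combination a * hbc
          | linear_combination -a * hbc
          | linear_combination hbc
          | linear_combination -hbc
    · subst ha
      ext i j
      fin_cases i <;> fin_cases j <;>
        simp [Matrix.mul_apply, Fin.sum_univ_three, Matrix.vecHead, Matrix.vecTail] <;>
        first
          | ring1
          | linear_combination d * hbc
          | linear_combination -d * hbc
          | linear_combination hbc
          | linear_combination -hbc
    · subst ha; subst hd
      ext i j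
      fin_cases i <;> fin_cases j <;>
        simp [Matrix.mul_apply, Fin.sum_univ_three, Matrix.vecHead, Matrix.vecTail] <;>
        ring
end

section
/- If the assignment σ_i ↦ I_{i-1} ⊕ [[a,b],[c,d]] ⊕ I_{n-i-1} (n ≥ 3) defines a group homomorphism from B_n to GL_n(K) for a field K, and the block [[a,b],[c,d]] is not the identity matrix, then at least one of a, d is zero. -/
/-!
Only the braid relation `σ₀ σ₁ σ₀ = σ₁ σ₀ σ₁` is needed. Comparing the entries `(i, i)`,
`(i, i+1)`, `(i+1, i)` and `(i+2, i+2)` of the images of its two sides gives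
`a (a + bc - 1) = abd = acd = d (1 - bc - d) = 0`. If `a` and `d` are both nonzero, this forces
`b = c = 0` and then `a = d = 1`, i.e. the block is the identity.
-/

theorem σ_mul_σ_mul_σ {n : ℕ} {i j : Fin (n - 1)} (hij : (i : ℕ) + 1 = j) :
    σ i * σ j * σ i = σ j * σ i * σ j := by
  have hrel : FreeGroup.of i * .of j * .of i * (.of j * .of i * .of j)⁻¹ ∈ braidRels (n - 1) :=
    Or.inl ⟨i, j, hij, rfl⟩
  exact mul_inv_eq_one.mp ((QuotientGroup.eq_one_iff _).mpr (Subgroup.subset_normalClosure hrel))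

section genMat

variable {R : Type*} [CommRing R] {n : ℕ} (a b c d : R)

theorem genMat_mul_apply {i : ℕ} (hi : i + 1 < n) (N : Matrix (Fin n) (Fin n) R) (j k : Fin n) :
    (genMat R n a b c d i * N) j k =
      if (j : ℕ) = i then a * N ⟨i, by omega⟩ k + b * N ⟨i + 1, hi⟩ k
      else if (j : ℕ) = i + 1 then c * N ⟨i, by omega⟩ k + d * N ⟨i + 1, hi⟩ k
      else N j k := by
  rw [Matrix.mul_apply]
  by_cases hj : (j : ℕ) = i ∨ (j : ℕ) = i + 1
  · rw [Finset.sum_eq_add ⟨i, by omega⟩ ⟨i + 1, hi⟩ (by simp [Fin.ext_iff]) ?_ (by simp) (by simp)]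
    · rcases hj with hj | hj <;> simp [genMat, hj]
    · rintro p - ⟨hp1, hp2⟩
      simp only [ne_eq, Fin.ext_iff] at hp1 hp2
      have hjp : j ≠ p := by omega
      simp [genMat, hp1, hp2, hjp]
  · rw [not_or] at hj
    rw [if_neg hj.1, if_neg hj.2,
      Finset.sum_eq_single j (fun p _ hp => by simp [genMat, hj, Ne.symm hp]) (by simp)]
    simp [genMat, hj]

theorem entries_eq_zero_of_genMat_braid {i : ℕ} (hi : i + 2 < n)
    (h : genMat R n a b c d i * genMat R n a b c d (i + 1) * genMat R n a b c d i =
      genMat R n a b c d (i + 1) * genMat R n a b c d i * genMat R n a b c d (i + 1)) :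
    a * (a + b * c - 1) = 0 ∧ a * b * d = 0 ∧ a * c * d = 0 ∧ d * (1 - b * c - d) = 0 := by
  have entry (j k : Fin n) := congrFun (congrFun h j) k
  have e00 := entry ⟨i, by omega⟩ ⟨i, by omega⟩
  have e01 := entry ⟨i, by omega⟩ ⟨i + 1, by omega⟩
  have e10 := entry ⟨i + 1, by omega⟩ ⟨i, by omega⟩
  have e22 := entry ⟨i + 2, by omega⟩ ⟨i + 2, by omega⟩
  simp only [mul_assoc, genMat_mul_apply a b c d (show i + 1 < n by omega),
    genMat_mul_apply a b c d (show i + 1 + 1 < n by omega)] at e00 e01 e10 e22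
  have h2 : i + 1 + 1 ≠ i := by omega
  simp [genMat, h2, h2.symm] at e00 e01 e10 e22
  exact ⟨by linear_combination e00, by linear_combination e01, by linear_combination e10,
    by linear_combination e22⟩

end genMat

theorem block_eq_one_of_entries_eq_zero {R : Type*} [CommRing R] [NoZeroDivisors R] {a b c d : R}
    (ha : a ≠ 0) (hd : d ≠ 0)
    (h : a * (a + b * c - 1) = 0 ∧ a * b * d = 0 ∧ a * c * d = 0 ∧ d * (1 - b * c - d) = 0) :
    !![a, b; c, d] = 1 := by
  obtain ⟨h00, h01, h10, h22⟩ := h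
  have hb : b = 0 := by simpa [ha, hd] using h01
  have hc : c = 0 := by simpa [ha, hd] using h10
  subst hb hc
  have ha1 : a = 1 := by
    have : a * (a - 1) = 0 := by linear_combination h00
    simpa [ha, sub_eq_zero] using this
  have hd1 : d = 1 := by
    have : d * (d - 1) = 0 := by linear_combination -h22
    simpa [hd, sub_eq_zero] using this
  rw [ha1, hd1, Matrix.one_fin_two]

theorem stmt_15_general (K : Type*) [Field K] (n : ℕ) (hn : 3 ≤ n) (a b c d : K)
    (Ψ : BraidGroup n →* GL (Fin n) K)
    (hΨ : ∀ i : Fin (n - 1), (↑(Ψ (σ i)) : Matrix (Fin n) (Fin n) K) = genMat K n a b c d (i : ℕ))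
    (hblock : !![a, b; c, d] ≠ 1) :
    a = 0 ∨ d = 0 := by
  have hrel := σ_mul_σ_mul_σ (i := (⟨0, by omega⟩ : Fin (n - 1))) (j := ⟨1, by omega⟩) rfl
  have hmat : genMat K n a b c d 0 * genMat K n a b c d (0 + 1) * genMat K n a b c d 0 =
      genMat K n a b c d (0 + 1) * genMat K n a b c d 0 * genMat K n a b c d (0 + 1) := by
    simpa [hΨ] using congrArg (fun g => (Ψ g : Matrix (Fin n) (Fin n) K)) hrel
  by_contra! h
  exact hblock (block_eq_one_of_entries_eq_zero h.1 h.2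
    (entries_eq_zero_of_genMat_braid a b c d (by omega) hmat))

theorem stmt_15 (K : Type*) [Field K] (n : ℕ) (hn : 3 ≤ n) (a b c d : K)
    (hdet : a * d - b * c ≠ 0)
    (Ψ : BraidGroup n →* GL (Fin n) K)
    (hΨ : ∀ i : Fin (n - 1), (↑(Ψ (σ i)) : Matrix (Fin n) (Fin n) K) = genMat K n a b c d (i : ℕ))
    (hblock : !![a, b; c, d] ≠ 1) :
    a = 0 ∨ d = 0 :=
  stmt_15_general K n hn a b c d Ψ hΨ hblock
end

section
/- For a field K and a, b, c, d ∈ K with ad - bc ≠ 0, if the 3×3 matrices A_1 = I_0 ⊕ [[a,b],[c,d]] ⊕ I_1 and A_2 = I_1 ⊕ [[a,b],[c,d]] ⊕ I_0 satisfy A_1 A_2 A_1 = A_2 A_1 A_2 and b = 0, then the block [[a,b],[c,d]] equals the identity matrix (i.e., the representation is trivial). -/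
theorem stmt_16 (K : Type*) [Field K] (a b c d : K) (hdet : a * d - b * c ≠ 0)
    (hbraid : !![a, b, 0; c, d, 0; 0, 0, 1] * !![1, 0, 0; 0, a, b; 0, c, d] *
        !![a, b, 0; c, d, 0; 0, 0, 1] =
      !![1, 0, 0; 0, a, b; 0, c, d] * !![a, b, 0; c, d, 0; 0, 0, 1] *
        !![1, 0, 0; 0, a, b; 0, c, d])
    (hb : b = 0) :
    !![a, b; c, d] = 1 := by
  subst hb
  have ha : a ≠ 0 := fun h => hdet (by simp [h])
  have hd : d ≠ 0 := fun h => hdet (by simp [h])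
  simp only [Matrix.mul_fin_three] at hbraid
  have h00 := congr_fun (congr_fun hbraid 0) 0
  have h11 := congr_fun (congr_fun hbraid 1) 1
  have h21 := congr_fun (congr_fun hbraid 2) 1
  simp [Matrix.cons_val', Matrix.cons_val_zero, Matrix.cons_val_one] at h00 h11 h21
  have ha1 : a = 1 := by
    have : a * (a - 1) = 0 := by ring_nf; linear_combination h00
    rcases mul_eq_zero.mp this with h | h
    · exact absurd h ha
    · exact sub_eq_zero.mp h
  subst ha1
  have hd1 : d = 1 := by
    have : d * (d - 1) = 0 := by ring_nf; linear_combination h11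
    rcases mul_eq_zero.mp this with h | h
    · exact absurd h hd
    · exact sub_eq_zero.mp h
  subst hd1
  have hc : c = 0 := by linear_combination -h21
  subst hc
  exact Matrix.one_fin_two.symm
end
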